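/- Let f : X → Y be an Edelstein contracting map between compact metric spaces (strictly distance-decreasing on distinct points). Then for any distinct Borel probability measures μ, η on X, the Wasserstein distance satisfies d_{PY}(Pf(μ), Pf(η)) < d_{PX}(μ, η). -/

import Mathlib

/-!
A coupling `λ` of `μ` and `η` costs at least `w = W(μ, η) > 0`, so it puts mass at least
`w / (2 M)` (with `M ≥ sup d`) on the compact set `K = {(x, x') | w / 2 ≤ d(x, x')}`, on which the
gap `d(x, x') - d(f x, f x')` is at least some `ε > 0`. Pushing `λ` forward by `f × f` gives a
coupling of `f_* μ` and `f_* η` cheaper by `ε w / (2 M)`, a bound independent of `λ`.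
Positivity of `W` for `μ ≠ η` is the easy half of Kantorovich–Rubinstein duality, tested on
thickened indicators of closed sets.
-/

open MeasureTheory

/-- The Wasserstein (Kantorovich) distance between two Borel probability measures. -/
noncomputable def wassersteinDist {X : Type*} [MetricSpace X] [MeasurableSpace X]
    (μ η : Measure X) : ℝ :=
  sInf {r : ℝ | ∃ lam : Measure (X × X), IsProbabilityMeasure lam ∧
    lam.map Prod.fst = μ ∧ lam.map Prod.snd = η ∧ r = ∫ p, dist p.1 p.2 ∂lam}

open Metric Set Filter
open scoped NNReal

structure IsCoupling {α β : Type*} [MeasurableSpace α] [MeasurableSpace β]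
    (lam : Measure (α × β)) (μ : Measure α) (η : Measure β) : Prop where
  isProbabilityMeasure : IsProbabilityMeasure lam
  map_fst : lam.map Prod.fst = μ
  map_snd : lam.map Prod.snd = η

section Coupling

variable {α β γ δ : Type*} [MeasurableSpace α] [MeasurableSpace β] [MeasurableSpace γ]
  [MeasurableSpace δ]

lemma isCoupling_prod (μ : Measure α) (η : Measure β) [IsProbabilityMeasure μ]
    [IsProbabilityMeasure η] : IsCoupling (μ.prod η) μ η :=
  ⟨inferInstance, by simp, by simp⟩

lemma IsCoupling.map {lam : Measure (α × β)} {μ : Measure α} {η : Measure β}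
    (h : IsCoupling lam μ η) {f : α → γ} {g : β → δ} (hf : Measurable f) (hg : Measurable g) :
    IsCoupling (lam.map (Prod.map f g)) (μ.map f) (η.map g) := by
  have := h.isProbabilityMeasure
  refine ⟨Measure.isProbabilityMeasure_map (hf.prodMap hg).aemeasurable, ?_, ?_⟩
  · rw [Measure.map_map measurable_fst (hf.prodMap hg), ← h.map_fst,
      Measure.map_map hf measurable_fst]
    rfl
  · rw [Measure.map_map measurable_snd (hf.prodMap hg), ← h.map_snd,
      Measure.map_map hg measurable_snd]
    rfl

end Coupling

section Wasserstein

variable {X : Type*} [MetricSpace X] [MeasurableSpace X] {μ η : Measure X}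

lemma wassersteinDist_nonneg (μ η : Measure X) : 0 ≤ wassersteinDist μ η :=
  Real.sInf_nonneg <| by
    rintro r ⟨lam, -, -, -, rfl⟩
    exact integral_nonneg fun _ ↦ dist_nonneg

lemma wassersteinDist_le_integral {lam : Measure (X × X)} (h : IsCoupling lam μ η) :
    wassersteinDist μ η ≤ ∫ p, dist p.1 p.2 ∂lam := by
  refine csInf_le ⟨0, ?_⟩ ⟨lam, h.isProbabilityMeasure, h.map_fst, h.map_snd, rfl⟩
  rintro r ⟨lam, -, -, -, rfl⟩
  exact integral_nonneg fun _ ↦ dist_nonneg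

lemma le_wassersteinDist {c : ℝ} (hex : ∃ lam, IsCoupling lam μ η)
    (h : ∀ lam, IsCoupling lam μ η → c ≤ ∫ p, dist p.1 p.2 ∂lam) : c ≤ wassersteinDist μ η := by
  obtain ⟨lam, hlam⟩ := hex
  refine le_csInf ⟨_, lam, hlam.isProbabilityMeasure, hlam.map_fst, hlam.map_snd, rfl⟩ ?_
  rintro r ⟨lam, h₁, h₂, h₃, rfl⟩
  exact h lam ⟨h₁, h₂, h₃⟩

lemma wassersteinDist_map_le_integral {α Y : Type*} [MeasurableSpace α] [MetricSpace Y]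
    [MeasurableSpace Y] [OpensMeasurableSpace Y] [SecondCountableTopology Y] {μ η : Measure α}
    {lam : Measure (α × α)} (h : IsCoupling lam μ η) {f : α → Y} (hf : Measurable f) :
    wassersteinDist (μ.map f) (η.map f) ≤ ∫ p, dist (f p.1) (f p.2) ∂lam := by
  have := wassersteinDist_le_integral (h.map hf hf)
  rwa [integral_map (hf.prodMap hf).aemeasurable continuous_dist.aestronglyMeasurable] at this

variable [CompactSpace X]

lemma abs_integral_sub_integral_le_mul_integral [OpensMeasurableSpace X] {lam : Measure (X × X)}
    (h : IsCoupling lam μ η) {L : ℝ≥0} {g : X → ℝ} (hg : LipschitzWith L g) :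
    |∫ x, g x ∂μ - ∫ x, g x ∂η| ≤ L * ∫ p, dist p.1 p.2 ∂lam := by
  have := h.isProbabilityMeasure
  have hint : ∀ φ : X × X → ℝ, Continuous φ → Integrable φ lam := fun φ hφ ↦
    hφ.integrable_of_hasCompactSupport (.of_compactSpace φ)
  have hg₁ : Integrable (fun p ↦ g p.1) lam := hint _ (hg.continuous.comp continuous_fst)
  have hg₂ : Integrable (fun p ↦ g p.2) lam := hint _ (hg.continuous.comp continuous_snd)
  rw [← h.map_fst, ← h.map_snd, integral_map measurable_fst.aemeasurable
    hg.continuous.aestronglyMeasurable, integral_map measurable_snd.aemeasurable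
    hg.continuous.aestronglyMeasurable, ← integral_sub hg₁ hg₂, ← integral_const_mul]
  refine (abs_integral_le_integral_abs).trans (integral_mono (hg₁.sub hg₂).abs
    ((hint _ continuous_dist).const_mul _) fun p ↦ ?_)
  rw [← Real.dist_eq]
  exact hg.dist_le_mul p.1 p.2

lemma abs_integral_sub_integral_le_mul_wassersteinDist [OpensMeasurableSpace X]
    [IsProbabilityMeasure μ] [IsProbabilityMeasure η] {L : ℝ≥0} {g : X → ℝ}
    (hg : LipschitzWith L g) :
    |∫ x, g x ∂μ - ∫ x, g x ∂η| ≤ L * wassersteinDist μ η := by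
  rw [wassersteinDist, ← smul_eq_mul, ← Real.sInf_smul_of_nonneg L.coe_nonneg]
  refine le_csInf ⟨_, _, ⟨μ.prod η, inferInstance, by simp, by simp, rfl⟩, rfl⟩ ?_
  rintro _ ⟨_, ⟨lam, h₁, h₂, h₃, rfl⟩, rfl⟩
  exact abs_integral_sub_integral_le_mul_integral ⟨h₁, h₂, h₃⟩ hg

lemma wassersteinDist_pos [BorelSpace X] [IsProbabilityMeasure μ] [IsProbabilityMeasure η]
    (hne : μ ≠ η) : 0 < wassersteinDist μ η := by
  refine (wassersteinDist_nonneg μ η).lt_of_ne fun h₀ ↦ hne ?_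
  have hδ (n : ℕ) : (0 : ℝ) < 1 / (n + 1) := by positivity
  have hclosed (F : Set X) (hF : IsClosed F) : μ F = η F := by
    have hμ := tendsto_integral_thickenedIndicator_of_isClosed μ hF hδ
      tendsto_one_div_add_atTop_nhds_zero_nat
    have hη := tendsto_integral_thickenedIndicator_of_isClosed η hF hδ
      tendsto_one_div_add_atTop_nhds_zero_nat
    have heq (n : ℕ) : ∫ x, (thickenedIndicator (hδ n) F x : ℝ) ∂μ
        = ∫ x, (thickenedIndicator (hδ n) F x : ℝ) ∂η := by
      have := abs_integral_sub_integral_le_mul_wassersteinDist (μ := μ) (η := η)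
        ((LipschitzWith.subtype_val _).comp (lipschitzWith_thickenedIndicator (hδ n) F))
      rw [← h₀, mul_zero] at this
      exact sub_eq_zero.1 (abs_nonpos_iff.1 this)
    simp_rw [heq] at hμ
    exact (measureReal_eq_measureReal_iff).1 (tendsto_nhds_unique hμ hη)
  refine ext_of_generate_finite _ ?_ isPiSystem_isClosed hclosed (by simp)
  rw [BorelSpace.measurable_eq (α := X), borel_eq_generateFrom_isClosed]

end Wasserstein

section Gap

variable {Z : Type*} [MeasurableSpace Z] {μ : Measure Z}

lemma integral_le_mul_measureReal_add [IsProbabilityMeasure μ] {φ : Z → ℝ} (hφm : Measurable φ)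
    (hφ : Integrable φ μ) {M δ : ℝ} (hM : ∀ z, φ z ≤ M) (hδ : 0 ≤ δ) :
    ∫ z, φ z ∂μ ≤ M * μ.real {z | δ ≤ φ z} + δ := by
  have hK : MeasurableSet {z | δ ≤ φ z} := measurableSet_le measurable_const hφm
  have hind : Integrable ({z | δ ≤ φ z}.indicator fun _ ↦ M) μ := (integrable_const M).indicator hK
  calc ∫ z, φ z ∂μ ≤ ∫ z, ({z | δ ≤ φ z}.indicator (fun _ ↦ M) z + δ) ∂μ := by
        refine integral_mono hφ (hind.add (integrable_const δ)) fun z ↦ ?_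
        by_cases hz : δ ≤ φ z
        · simp only [indicator_of_mem (show z ∈ {z | δ ≤ φ z} from hz)]
          linarith [hM z]
        · simp only [indicator_of_notMem (show z ∉ {z | δ ≤ φ z} from hz)]
          linarith
    _ = M * μ.real {z | δ ≤ φ z} + δ := by
        rw [integral_add hind (integrable_const δ), integral_indicator_const M hK]
        simp [mul_comm]

lemma integral_add_mul_measureReal_le [IsFiniteMeasure μ] {φ ψ : Z → ℝ} (hφ : Integrable φ μ)
    (hψ : Integrable ψ μ) (hle : ψ ≤ φ) {K : Set Z} (hK : MeasurableSet K) {ε : ℝ}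
    (hε : ∀ z ∈ K, ε ≤ φ z - ψ z) :
    ∫ z, ψ z ∂μ + ε * μ.real K ≤ ∫ z, φ z ∂μ := by
  have hind : Integrable (K.indicator fun _ ↦ ε) μ := (integrable_const ε).indicator hK
  calc ∫ z, ψ z ∂μ + ε * μ.real K = ∫ z, (ψ z + K.indicator (fun _ ↦ ε) z) ∂μ := by
        rw [integral_add hψ hind, integral_indicator_const ε hK, smul_eq_mul, mul_comm]
    _ ≤ ∫ z, φ z ∂μ := by
        refine integral_mono (hψ.add hind) hφ fun z ↦ ?_
        by_cases hz : z ∈ K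
        · simp only [indicator_of_mem hz]
          linarith [hε z hz]
        · simp only [indicator_of_notMem hz, add_zero]
          exact hle z

variable [TopologicalSpace Z] [CompactSpace Z] [OpensMeasurableSpace Z]

lemma exists_pos_forall_integral_add_le {φ ψ : Z → ℝ} (hφ : Continuous φ) (hψ : Continuous ψ)
    (hle : ψ ≤ φ) (hlt : ∀ z, 0 < φ z → ψ z < φ z) {a : ℝ} (ha : 0 < a) :
    ∃ c > 0, ∀ (μ : Measure Z) [IsProbabilityMeasure μ],
      a ≤ ∫ z, φ z ∂μ → ∫ z, ψ z ∂μ + c ≤ ∫ z, φ z ∂μ := by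
  set K := {z | a / 2 ≤ φ z}
  have hK : IsClosed K := isClosed_le continuous_const hφ
  obtain ⟨ε, hε, hεK⟩ := hK.isCompact.exists_forall_le' (hφ.sub hψ).continuousOn
    (a := 0) fun z hz ↦ sub_pos.2 (hlt z (by linarith [show a / 2 ≤ φ z from hz]))
  obtain ⟨M₀, hM₀⟩ := (isCompact_range hφ).bddAbove
  set M := max M₀ 1
  have hM (z : Z) : φ z ≤ M := le_max_of_le_left (hM₀ (mem_range_self z))
  refine ⟨ε * (a / 2 / M), by positivity, fun μ _ haμ ↦ ?_⟩
  have hint : ∀ g : Z → ℝ, Continuous g → Integrable g μ := fun g hg ↦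
    hg.integrable_of_hasCompactSupport (.of_compactSpace g)
  have hmass : a / 2 / M ≤ μ.real K := by
    rw [div_le_iff₀ (by positivity), mul_comm]
    linarith [integral_le_mul_measureReal_add hφ.measurable (hint φ hφ) hM (half_pos ha).le]
  calc ∫ z, ψ z ∂μ + ε * (a / 2 / M) ≤ ∫ z, ψ z ∂μ + ε * μ.real K := by gcongr
    _ ≤ ∫ z, φ z ∂μ :=
        integral_add_mul_measureReal_le (hint φ hφ) (hint ψ hψ) hle hK.measurableSet hεK

end Gap

/-- If `f` is Edelstein contracting between compact metric spaces, then the pushforward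
map strictly decreases the Wasserstein distance between distinct probability measures. -/
theorem pushforward_strictly_decreases_wasserstein
    {X Y : Type*} [MetricSpace X] [CompactSpace X] [MeasurableSpace X] [BorelSpace X]
    [MetricSpace Y] [CompactSpace Y] [MeasurableSpace Y] [BorelSpace Y]
    (f : X → Y) (hEd : ∀ x x' : X, x ≠ x' → dist (f x) (f x') < dist x x')
    (μ η : Measure X) (hμ : IsProbabilityMeasure μ) (hη : IsProbabilityMeasure η)
    (hne : μ ≠ η) :
    wassersteinDist (μ.map f) (η.map f) < wassersteinDist μ η := by
  have hle (x x' : X) : dist (f x) (f x') ≤ dist x x' := by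
    rcases eq_or_ne x x' with rfl | h
    · simp
    · exact (hEd x x' h).le
  have hf : Continuous f :=
    (LipschitzWith.of_dist_le_mul (K := 1) fun x x' ↦ by simpa using hle x x').continuous
  obtain ⟨c, hc, hgap⟩ := exists_pos_forall_integral_add_le (φ := fun p : X × X ↦ dist p.1 p.2)
    (ψ := fun p ↦ dist (f p.1) (f p.2)) (by fun_prop) (by fun_prop) (fun p ↦ hle p.1 p.2)
    (fun p hp ↦ hEd _ _ (dist_pos.1 hp)) (wassersteinDist_pos hne)
  have hgain : wassersteinDist (μ.map f) (η.map f) + c ≤ wassersteinDist μ η := by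
    refine le_wassersteinDist ⟨_, isCoupling_prod μ η⟩ fun lam hlam ↦ ?_
    have := hlam.isProbabilityMeasure
    calc wassersteinDist (μ.map f) (η.map f) + c ≤ ∫ p, dist (f p.1) (f p.2) ∂lam + c := by
          gcongr
          exact wassersteinDist_map_le_integral hlam hf.measurable
      _ ≤ ∫ p, dist p.1 p.2 ∂lam := hgap lam (wassersteinDist_le_integral hlam)
  linarith
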